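/- Let B, S, C be entrywise nonnegative with all entries bounded above by a constant K > 0. Then there exists δ₀ > 0 (depending only on A, α, β, σ and K) such that for every δ ≥ δ₀ for which the update S⁺ = U_S(S; δ) is entrywise nonnegative with entries bounded by K, one has J(B, S⁺, C) ≤ J(B, S, C), and equality holds if and only if S satisfies the S-part KKT conditions. (Paper's Theorem 29.) -/
import Mathlib


open Matrix Classical Filter

noncomputable section

/-- Squared Frobenius norm. -/
def frobSq {m n : ℕ} (X : Matrix (Fin m) (Fin n) ℝ) : ℝ := ∑ i, ∑ j, (X i j) ^ 2

/-- The BNMtF objective J(B,S,C). -/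
def objJ {M N P : ℕ} (A : Matrix (Fin M) (Fin N) ℝ) (α β : ℝ)
    (B : Matrix (Fin M) (Fin P) ℝ) (S : Matrix (Fin P) (Fin P) ℝ) (C : Matrix (Fin P) (Fin N) ℝ) : ℝ :=
  (1 / 2) * frobSq (A - B * S * C) + (α / 2) * frobSq (C * Cᵀ - 1) +
    (β / 2) * frobSq (Bᵀ * B - 1)

/-- ∇_B J. -/
def gradB {M N P : ℕ} (A : Matrix (Fin M) (Fin N) ℝ) (β : ℝ)
    (B : Matrix (Fin M) (Fin P) ℝ) (S : Matrix (Fin P) (Fin P) ℝ) (C : Matrix (Fin P) (Fin N) ℝ) : Matrix (Fin M) (Fin P) ℝ :=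
  B * S * C * Cᵀ * Sᵀ - A * Cᵀ * Sᵀ + β • (B * Bᵀ * B) - β • B

/-- ∇_C J. -/
def gradC {M N P : ℕ} (A : Matrix (Fin M) (Fin N) ℝ) (α : ℝ)
    (B : Matrix (Fin M) (Fin P) ℝ) (S : Matrix (Fin P) (Fin P) ℝ) (C : Matrix (Fin P) (Fin N) ℝ) : Matrix (Fin P) (Fin N) ℝ :=
  Sᵀ * Bᵀ * B * S * C - Sᵀ * Bᵀ * A + α • (C * Cᵀ * C) - α • C

/-- ∇_S J. -/
def gradS {M N P : ℕ} (A : Matrix (Fin M) (Fin N) ℝ)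
    (B : Matrix (Fin M) (Fin P) ℝ) (S : Matrix (Fin P) (Fin P) ℝ) (C : Matrix (Fin P) (Fin N) ℝ) : Matrix (Fin P) (Fin P) ℝ :=
  Bᵀ * B * S * C * Cᵀ - Bᵀ * A * Cᵀ

/-- B-part KKT conditions. -/
def KKTB {M N P : ℕ} (A : Matrix (Fin M) (Fin N) ℝ) (β : ℝ)
    (B : Matrix (Fin M) (Fin P) ℝ) (S : Matrix (Fin P) (Fin P) ℝ) (C : Matrix (Fin P) (Fin N) ℝ) : Prop :=
  ∀ m p, 0 ≤ gradB A β B S C m p ∧ gradB A β B S C m p * B m p = 0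

/-- C-part KKT conditions. -/
def KKTC {M N P : ℕ} (A : Matrix (Fin M) (Fin N) ℝ) (α : ℝ)
    (B : Matrix (Fin M) (Fin P) ℝ) (S : Matrix (Fin P) (Fin P) ℝ) (C : Matrix (Fin P) (Fin N) ℝ) : Prop :=
  ∀ q n, 0 ≤ gradC A α B S C q n ∧ gradC A α B S C q n * C q n = 0

/-- S-part KKT conditions. -/
def KKTS {M N P : ℕ} (A : Matrix (Fin M) (Fin N) ℝ)
    (B : Matrix (Fin M) (Fin P) ℝ) (S : Matrix (Fin P) (Fin P) ℝ) (C : Matrix (Fin P) (Fin N) ℝ) : Prop :=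
  ∀ p q, 0 ≤ gradS A B S C p q ∧ gradS A B S C p q * S p q = 0

/-- Full KKT conditions. -/
def KKT {M N P : ℕ} (A : Matrix (Fin M) (Fin N) ℝ) (α β : ℝ)
    (B : Matrix (Fin M) (Fin P) ℝ) (S : Matrix (Fin P) (Fin P) ℝ) (C : Matrix (Fin P) (Fin N) ℝ) : Prop :=
  KKTB A β B S C ∧ KKTS A B S C ∧ KKTC A α B S C

/-- B̄. -/
def Bbar {M N P : ℕ} (A : Matrix (Fin M) (Fin N) ℝ) (β σ : ℝ)
    (B : Matrix (Fin M) (Fin P) ℝ) (S : Matrix (Fin P) (Fin P) ℝ) (C : Matrix (Fin P) (Fin N) ℝ) : Matrix (Fin M) (Fin P) ℝ :=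
  Matrix.of fun m p => if 0 ≤ gradB A β B S C m p then B m p else max (B m p) σ

/-- Denominator matrix of the additive B-update. -/
def denomB {M N P : ℕ} (A : Matrix (Fin M) (Fin N) ℝ) (β σ : ℝ)
    (B : Matrix (Fin M) (Fin P) ℝ) (S : Matrix (Fin P) (Fin P) ℝ) (C : Matrix (Fin P) (Fin N) ℝ) : Matrix (Fin M) (Fin P) ℝ :=
  Bbar A β σ B S C * S * C * Cᵀ * Sᵀ +
    β • (Bbar A β σ B S C * (Bbar A β σ B S C)ᵀ * Bbar A β σ B S C)

/-- Additive B-update U_B(B; δ). -/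
def UB {M N P : ℕ} (A : Matrix (Fin M) (Fin N) ℝ) (β σ : ℝ)
    (B : Matrix (Fin M) (Fin P) ℝ) (S : Matrix (Fin P) (Fin P) ℝ) (C : Matrix (Fin P) (Fin N) ℝ) (δ : ℝ) : Matrix (Fin M) (Fin P) ℝ :=
  Matrix.of fun m p =>
    B m p - Bbar A β σ B S C m p * gradB A β B S C m p / (denomB A β σ B S C m p + δ)

/-- I_m : set of non-KKT indices in row m of B. -/
def IsetB {M N P : ℕ} (A : Matrix (Fin M) (Fin N) ℝ) (β : ℝ)
    (B : Matrix (Fin M) (Fin P) ℝ) (S : Matrix (Fin P) (Fin P) ℝ) (C : Matrix (Fin P) (Fin N) ℝ) (m : Fin M) : Set (Fin P) :=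
  {p | (0 < B m p ∧ gradB A β B S C m p ≠ 0) ∨ (B m p = 0 ∧ gradB A β B S C m p < 0)}

/-- Diagonal entries d^m_{pp}(δ). -/
def dB {M N P : ℕ} (A : Matrix (Fin M) (Fin N) ℝ) (β σ : ℝ)
    (B : Matrix (Fin M) (Fin P) ℝ) (S : Matrix (Fin P) (Fin P) ℝ) (C : Matrix (Fin P) (Fin N) ℝ) (δ : ℝ) (m : Fin M) (p : Fin P) : ℝ :=
  if p ∈ IsetB A β B S C m then (denomB A β σ B S C m p + δ) / Bbar A β σ B S C m p else 0

/-- Auxiliary function G_B(B′, B; δ). -/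
def GB {M N P : ℕ} (A : Matrix (Fin M) (Fin N) ℝ) (α β σ : ℝ)
    (B : Matrix (Fin M) (Fin P) ℝ) (S : Matrix (Fin P) (Fin P) ℝ) (C : Matrix (Fin P) (Fin N) ℝ) (B' : Matrix (Fin M) (Fin P) ℝ) (δ : ℝ) : ℝ :=
  objJ A α β B S C + (∑ m, ∑ p, (B' m p - B m p) * gradB A β B S C m p) +
    (1 / 2) * ∑ m, ∑ p, dB A β σ B S C δ m p * (B' m p - B m p) ^ 2

/-- C̄. -/
def Cbar {M N P : ℕ} (A : Matrix (Fin M) (Fin N) ℝ) (α σ : ℝ)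
    (B : Matrix (Fin M) (Fin P) ℝ) (S : Matrix (Fin P) (Fin P) ℝ) (C : Matrix (Fin P) (Fin N) ℝ) : Matrix (Fin P) (Fin N) ℝ :=
  Matrix.of fun q n => if 0 ≤ gradC A α B S C q n then C q n else max (C q n) σ

/-- Denominator matrix of the additive C-update. -/
def denomC {M N P : ℕ} (A : Matrix (Fin M) (Fin N) ℝ) (α σ : ℝ)
    (B : Matrix (Fin M) (Fin P) ℝ) (S : Matrix (Fin P) (Fin P) ℝ) (C : Matrix (Fin P) (Fin N) ℝ) : Matrix (Fin P) (Fin N) ℝ :=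
  Sᵀ * Bᵀ * B * S * Cbar A α σ B S C +
    α • (Cbar A α σ B S C * (Cbar A α σ B S C)ᵀ * Cbar A α σ B S C)

/-- Additive C-update U_C(C; δ). -/
def UC {M N P : ℕ} (A : Matrix (Fin M) (Fin N) ℝ) (α σ : ℝ)
    (B : Matrix (Fin M) (Fin P) ℝ) (S : Matrix (Fin P) (Fin P) ℝ) (C : Matrix (Fin P) (Fin N) ℝ) (δ : ℝ) : Matrix (Fin P) (Fin N) ℝ :=
  Matrix.of fun q n =>
    C q n - Cbar A α σ B S C q n * gradC A α B S C q n / (denomC A α σ B S C q n + δ)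

/-- S̄. -/
def Sbar {M N P : ℕ} (A : Matrix (Fin M) (Fin N) ℝ) (σ : ℝ)
    (B : Matrix (Fin M) (Fin P) ℝ) (S : Matrix (Fin P) (Fin P) ℝ) (C : Matrix (Fin P) (Fin N) ℝ) : Matrix (Fin P) (Fin P) ℝ :=
  Matrix.of fun p q => if 0 ≤ gradS A B S C p q then S p q else max (S p q) σ

/-- Denominator matrix of the additive S-update. -/
def denomS {M N P : ℕ} (A : Matrix (Fin M) (Fin N) ℝ) (σ : ℝ)
    (B : Matrix (Fin M) (Fin P) ℝ) (S : Matrix (Fin P) (Fin P) ℝ) (C : Matrix (Fin P) (Fin N) ℝ) : Matrix (Fin P) (Fin P) ℝ :=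
  Bᵀ * B * Sbar A σ B S C * C * Cᵀ

/-- Additive S-update U_S(S; δ). -/
def US {M N P : ℕ} (A : Matrix (Fin M) (Fin N) ℝ) (σ : ℝ)
    (B : Matrix (Fin M) (Fin P) ℝ) (S : Matrix (Fin P) (Fin P) ℝ) (C : Matrix (Fin P) (Fin N) ℝ) (δ : ℝ) : Matrix (Fin P) (Fin P) ℝ :=
  Matrix.of fun p q =>
    S p q - Sbar A σ B S C p q * gradS A B S C p q / (denomS A σ B S C p q + δ)

/-- I_q : set of non-KKT indices in column q of S. -/
def IsetS {M N P : ℕ} (A : Matrix (Fin M) (Fin N) ℝ)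
    (B : Matrix (Fin M) (Fin P) ℝ) (S : Matrix (Fin P) (Fin P) ℝ) (C : Matrix (Fin P) (Fin N) ℝ) (q : Fin P) : Set (Fin P) :=
  {p | (0 < S p q ∧ gradS A B S C p q ≠ 0) ∨ (S p q = 0 ∧ gradS A B S C p q < 0)}

/-- Diagonal entries d^q_{pp}(δ). -/
def dS {M N P : ℕ} (A : Matrix (Fin M) (Fin N) ℝ) (σ : ℝ)
    (B : Matrix (Fin M) (Fin P) ℝ) (S : Matrix (Fin P) (Fin P) ℝ) (C : Matrix (Fin P) (Fin N) ℝ) (δ : ℝ) (p q : Fin P) : ℝ :=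
  if p ∈ IsetS A B S C q then (denomS A σ B S C p q + δ) / Sbar A σ B S C p q else 0

/-- Auxiliary function G_S(S′, S; δ). -/
def GS {M N P : ℕ} (A : Matrix (Fin M) (Fin N) ℝ) (α β σ : ℝ)
    (B : Matrix (Fin M) (Fin P) ℝ) (S : Matrix (Fin P) (Fin P) ℝ) (C : Matrix (Fin P) (Fin N) ℝ) (S' : Matrix (Fin P) (Fin P) ℝ) (δ : ℝ) : ℝ :=
  objJ A α β B S C + (∑ p, ∑ q, (S' p q - S p q) * gradS A B S C p q) +
    (1 / 2) * ∑ q, ∑ p, dS A σ B S C δ p q * (S' p q - S p q) ^ 2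

lemma inner_eq_trace {m n : ℕ} (X Y : Matrix (Fin m) (Fin n) ℝ) :
    ∑ i, ∑ j, X i j * Y i j = (Xᵀ * Y).trace := by
  rw [Matrix.trace]
  simp only [Matrix.diag, Matrix.mul_apply, Matrix.transpose_apply]
  exact Finset.sum_comm

lemma frobSq_nonneg {m n : ℕ} (X : Matrix (Fin m) (Fin n) ℝ) : 0 ≤ frobSq X :=
  Finset.sum_nonneg fun _ _ => Finset.sum_nonneg fun _ _ => sq_nonneg _

lemma frobSq_sub {m n : ℕ} (E F : Matrix (Fin m) (Fin n) ℝ) :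
    frobSq (E - F) = frobSq E - 2 * (∑ i, ∑ j, E i j * F i j) + frobSq F := by
  have h : ∀ i j, (E i j - F i j) ^ 2 = E i j ^ 2 - 2 * (E i j * F i j) + F i j ^ 2 := by
    intros; ring
  simp_rw [frobSq, Matrix.sub_apply, h, Finset.sum_add_distrib, Finset.sum_sub_distrib,
    ← Finset.mul_sum]

lemma frobSq_mul_le {a b c : ℕ} (X : Matrix (Fin a) (Fin b) ℝ) (Y : Matrix (Fin b) (Fin c) ℝ) :
    frobSq (X * Y) ≤ frobSq X * frobSq Y := by
  unfold frobSq
  calc ∑ i, ∑ k, ((X * Y) i k) ^ 2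
      ≤ ∑ i, ∑ k, (∑ j, X i j ^ 2) * (∑ j, Y j k ^ 2) := by
        refine Finset.sum_le_sum fun i _ => Finset.sum_le_sum fun k _ => ?_
        rw [Matrix.mul_apply]
        exact Finset.sum_mul_sq_le_sq_mul_sq _ _ _
    _ = (∑ i, ∑ j, X i j ^ 2) * (∑ j, ∑ k, Y j k ^ 2) := by
        have h : (∑ j, ∑ k, Y j k ^ 2) = ∑ k : Fin c, ∑ j : Fin b, Y j k ^ 2 :=
          Finset.sum_comm
        rw [h, Finset.sum_mul_sum]

lemma entry_nonneg_mul {a b c : ℕ} {X : Matrix (Fin a) (Fin b) ℝ} {Y : Matrix (Fin b) (Fin c) ℝ}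
    (hX : ∀ i j, 0 ≤ X i j) (hY : ∀ i j, 0 ≤ Y i j) : ∀ i j, 0 ≤ (X * Y) i j := by
  intro i j
  rw [Matrix.mul_apply]
  exact Finset.sum_nonneg fun k _ => mul_nonneg (hX i k) (hY k j)

lemma frobSq_le_bound {a b : ℕ} {X : Matrix (Fin a) (Fin b) ℝ} {K : ℝ}
    (h0 : ∀ i j, 0 ≤ X i j) (hK : ∀ i j, X i j ≤ K) :
    frobSq X ≤ (a : ℝ) * b * K ^ 2 := by
  calc frobSq X ≤ ∑ _i : Fin a, ∑ _j : Fin b, K ^ 2 := by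
        refine Finset.sum_le_sum fun i _ => Finset.sum_le_sum fun j _ => ?_
        exact pow_le_pow_left₀ (h0 i j) (hK i j) 2
    _ = (a : ℝ) * b * K ^ 2 := by
        simp [Finset.sum_const, Finset.card_univ]; ring

lemma gradS_eq {M N P : ℕ} (A : Matrix (Fin M) (Fin N) ℝ)
    (B : Matrix (Fin M) (Fin P) ℝ) (S : Matrix (Fin P) (Fin P) ℝ) (C : Matrix (Fin P) (Fin N) ℝ) :
    gradS A B S C = Bᵀ * (B * S * C - A) * Cᵀ := by
  simp [gradS, Matrix.mul_sub, Matrix.sub_mul, Matrix.mul_assoc]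

lemma inner_gradS {M N P : ℕ} (A : Matrix (Fin M) (Fin N) ℝ)
    (B : Matrix (Fin M) (Fin P) ℝ) (S D : Matrix (Fin P) (Fin P) ℝ) (C : Matrix (Fin P) (Fin N) ℝ) :
    ∑ p, ∑ q, D p q * gradS A B S C p q
      = ∑ i, ∑ n, (B * S * C - A) i n * (B * D * C) i n := by
  rw [inner_eq_trace, inner_eq_trace, gradS_eq]
  set G := B * S * C - A with hG
  calc (Dᵀ * (Bᵀ * G * Cᵀ)).trace
      = ((Dᵀ * Bᵀ * G) * Cᵀ).trace := by simp only [Matrix.mul_assoc]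
    _ = (Cᵀ * (Dᵀ * Bᵀ * G)).trace := Matrix.trace_mul_comm _ _
    _ = ((Gᵀ * (B * D * C))ᵀ).trace := by
        simp only [Matrix.transpose_mul, Matrix.transpose_transpose, Matrix.mul_assoc]
    _ = (Gᵀ * (B * D * C)).trace := Matrix.trace_transpose _

lemma objJ_S_expand {M N P : ℕ} (A : Matrix (Fin M) (Fin N) ℝ) (α β : ℝ)
    (B : Matrix (Fin M) (Fin P) ℝ) (S D : Matrix (Fin P) (Fin P) ℝ) (C : Matrix (Fin P) (Fin N) ℝ) :
    objJ A α β B (S + D) C = objJ A α β B S C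
      + (∑ p, ∑ q, D p q * gradS A B S C p q) + (1 / 2) * frobSq (B * D * C) := by
  have hBDC : B * (S + D) * C = B * S * C + B * D * C := by
    rw [Matrix.mul_add, Matrix.add_mul]
  have hsub : A - (B * S * C + B * D * C) = (A - B * S * C) - (B * D * C) := by
    rw [sub_add_eq_sub_sub]
  have hip : ∑ p, ∑ q, D p q * gradS A B S C p q
      = - ∑ i, ∑ n, (A - B * S * C) i n * (B * D * C) i n := by
    rw [inner_gradS]
    have h : ∀ i n, (B * S * C - A) i n * (B * D * C) i n
        = -((A - B * S * C) i n * (B * D * C) i n) := by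
      intro i n; simp only [Matrix.sub_apply]; ring
    simp_rw [h, Finset.sum_neg_distrib]
  rw [objJ, objJ, hBDC, hsub, frobSq_sub, hip]
  ring


theorem stmt_6 {M N P : ℕ} (A : Matrix (Fin M) (Fin N) ℝ) (hA : ∀ i j, 0 ≤ A i j)
    (α β σ K : ℝ) (hα : 0 < α) (hβ : 0 < β) (hσ : 0 < σ) (hK : 0 < K) :
    ∃ δ₀ > 0, ∀ (B : Matrix (Fin M) (Fin P) ℝ) (S : Matrix (Fin P) (Fin P) ℝ) (C : Matrix (Fin P) (Fin N) ℝ),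
      (∀ m p, 0 ≤ B m p) → (∀ p q, 0 ≤ S p q) → (∀ q n, 0 ≤ C q n) →
      (∀ m p, B m p ≤ K) → (∀ p q, S p q ≤ K) → (∀ q n, C q n ≤ K) →
      ∀ δ, δ₀ ≤ δ →
        (∀ p q, 0 ≤ US A σ B S C δ p q) → (∀ p q, US A σ B S C δ p q ≤ K) →
        objJ A α β B (US A σ B S C δ) C ≤ objJ A α β B S C ∧
          (objJ A α β B (US A σ B S C δ) C = objJ A α β B S C ↔ KKTS A B S C) := by
  classical
  set L : ℝ := ((M : ℝ) * P * K ^ 2) * ((P : ℝ) * N * K ^ 2) with hL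
  have hL0 : 0 ≤ L := by positivity
  set K' : ℝ := max K σ with hK'def
  have hK'0 : 0 < K' := lt_of_lt_of_le hK (le_max_left _ _)
  refine ⟨max 1 (L * K'), lt_of_lt_of_le one_pos (le_max_left _ _), ?_⟩
  intro B S C hB hS hC hBK hSK hCK δ hδ _ _
  have hδ1 : (1 : ℝ) ≤ δ := le_trans (le_max_left _ _) hδ
  have hδ0 : 0 < δ := lt_of_lt_of_le one_pos hδ1
  have hδL : L * K' ≤ δ := le_trans (le_max_right _ _) hδ
  -- entrywise facts
  have hsb0 : ∀ p q, 0 ≤ Sbar A σ B S C p q := by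
    intro p q
    simp only [Sbar, Matrix.of_apply]
    split
    · exact hS p q
    · exact le_trans (hS p q) (le_max_left _ _)
  have hsbK : ∀ p q, Sbar A σ B S C p q ≤ K' := by
    intro p q
    simp only [Sbar, Matrix.of_apply]
    split
    · exact le_trans (hSK p q) (le_max_left _ _)
    · exact max_le_max (hSK p q) le_rfl
  have hdn0 : ∀ p q, 0 ≤ denomS A σ B S C p q := by
    intro p q
    have h1 : ∀ i j, (0:ℝ) ≤ Bᵀ i j := fun i j => hB j i
    have h2 : ∀ i j, (0:ℝ) ≤ Cᵀ i j := fun i j => hC j i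
    exact entry_nonneg_mul
      (entry_nonneg_mul (entry_nonneg_mul (entry_nonneg_mul h1 hB) hsb0) hC) h2 p q
  have hden : ∀ p q, 0 < denomS A σ B S C p q + δ := fun p q =>
    add_pos_of_nonneg_of_pos (hdn0 p q) hδ0
  set T : Fin P → Fin P → ℝ := fun p q =>
    Sbar A σ B S C p q * (gradS A B S C p q) ^ 2 / (denomS A σ B S C p q + δ) with hTdef
  have hT0 : ∀ p q, 0 ≤ T p q := fun p q =>
    div_nonneg (mul_nonneg (hsb0 p q) (sq_nonneg _)) (hden p q).le
  set Dm := US A σ B S C δ - S with hDmdef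
  have hUSm : US A σ B S C δ = S + Dm := by rw [hDmdef, add_sub_cancel]
  have hDm : ∀ p q, Dm p q
      = -(Sbar A σ B S C p q * gradS A B S C p q) / (denomS A σ B S C p q + δ) := by
    intro p q
    simp only [hDmdef, Matrix.sub_apply, US, Matrix.of_apply]
    ring
  have key : objJ A α β B (US A σ B S C δ) C
      = objJ A α β B S C + (∑ p, ∑ q, Dm p q * gradS A B S C p q)
        + (1 / 2) * frobSq (B * Dm * C) := by
    rw [hUSm]; exact objJ_S_expand A α β B S Dm C
  have hDg : ∀ p q, Dm p q * gradS A B S C p q = -(T p q) := by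
    intro p q; rw [hDm p q, hTdef]; ring
  have h1 : (∑ p, ∑ q, Dm p q * gradS A B S C p q) = -(∑ p, ∑ q, T p q) := by
    simp_rw [hDg, Finset.sum_neg_distrib]
  have hTsum0 : 0 ≤ ∑ p, ∑ q, T p q :=
    Finset.sum_nonneg fun p _ => Finset.sum_nonneg fun q _ => hT0 p q
  have hDsq : ∀ p q, Dm p q ^ 2 ≤ (K' / δ) * T p q := by
    intro p q
    have he : Dm p q ^ 2 = (Sbar A σ B S C p q / (denomS A σ B S C p q + δ)) * T p q := by
      rw [hDm p q, hTdef]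
      field_simp
    rw [he]
    refine mul_le_mul_of_nonneg_right ?_ (hT0 p q)
    exact div_le_div₀ hK'0.le (hsbK p q) hδ0 (le_add_of_nonneg_left (hdn0 p q))
  have hfDm : frobSq Dm ≤ (K' / δ) * ∑ p, ∑ q, T p q := by
    calc frobSq Dm ≤ ∑ p, ∑ q, (K' / δ) * T p q :=
          Finset.sum_le_sum fun p _ => Finset.sum_le_sum fun q _ => hDsq p q
      _ = (K' / δ) * ∑ p, ∑ q, T p q := by simp_rw [← Finset.mul_sum]
  have hfB : frobSq B ≤ (M : ℝ) * P * K ^ 2 := frobSq_le_bound hB hBK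
  have hfC : frobSq C ≤ (P : ℝ) * N * K ^ 2 := frobSq_le_bound hC hCK
  have hb2 : 0 ≤ K' / δ * ∑ p, ∑ q, T p q :=
    mul_nonneg (div_nonneg hK'0.le hδ0.le) hTsum0
  have h3 : frobSq (B * Dm * C) ≤ L * (K' / δ * ∑ p, ∑ q, T p q) := by
    calc frobSq (B * Dm * C) ≤ frobSq (B * Dm) * frobSq C := frobSq_mul_le _ _
      _ ≤ (frobSq B * frobSq Dm) * frobSq C :=
          mul_le_mul_of_nonneg_right (frobSq_mul_le _ _) (frobSq_nonneg _)
      _ ≤ (((M : ℝ) * P * K ^ 2) * (K' / δ * ∑ p, ∑ q, T p q)) * ((P : ℝ) * N * K ^ 2) := by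
          refine mul_le_mul (mul_le_mul hfB hfDm (frobSq_nonneg _) (by positivity))
            hfC (frobSq_nonneg _) ?_
          exact mul_nonneg (by positivity) hb2
      _ = L * (K' / δ * ∑ p, ∑ q, T p q) := by rw [hL]; ring
  have e2 : L * (K' / δ * ∑ p, ∑ q, T p q) ≤ ∑ p, ∑ q, T p q := by
    have hd1 : L * K' / δ ≤ 1 := (div_le_one hδ0).mpr hδL
    calc L * (K' / δ * ∑ p, ∑ q, T p q) = (L * K' / δ) * ∑ p, ∑ q, T p q := by ring
      _ ≤ 1 * ∑ p, ∑ q, T p q := mul_le_mul_of_nonneg_right hd1 hTsum0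
      _ = ∑ p, ∑ q, T p q := one_mul _
  have main : objJ A α β B (US A σ B S C δ) C
      ≤ objJ A α β B S C - (1 / 2) * ∑ p, ∑ q, T p q := by
    rw [key, h1]
    linarith
  refine ⟨by linarith, ?_, ?_⟩
  · intro heq
    have hTz : (∑ p, ∑ q, T p q) = 0 := le_antisymm (by linarith) hTsum0
    have hTpq : ∀ p q, T p q = 0 := by
      have hrow := (Finset.sum_eq_zero_iff_of_nonneg
        (fun p _ => Finset.sum_nonneg fun q _ => hT0 p q)).mp hTz
      intro p q
      exact (Finset.sum_eq_zero_iff_of_nonneg (fun q _ => hT0 p q)).mp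
        (hrow p (Finset.mem_univ p)) q (Finset.mem_univ q)
    intro p q
    have hsg : Sbar A σ B S C p q * (gradS A B S C p q) ^ 2 = 0 := by
      have ht := hTpq p q
      rw [hTdef] at ht
      exact (div_eq_zero_iff.mp ht).resolve_right (ne_of_gt (hden p q))
    by_cases hgpos : 0 ≤ gradS A B S C p q
    · refine ⟨hgpos, ?_⟩
      have hsbS : Sbar A σ B S C p q = S p q := by
        simp only [Sbar, Matrix.of_apply, if_pos hgpos]
      rcases mul_eq_zero.mp hsg with h' | h'
      · rw [hsbS] at h'; rw [h', mul_zero]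
      · rw [sq_eq_zero_iff.mp h', zero_mul]
    · exfalso
      push_neg at hgpos
      have hsbσ : σ ≤ Sbar A σ B S C p q := by
        simp only [Sbar, Matrix.of_apply, if_neg (not_le.mpr hgpos)]
        exact le_max_right _ _
      rcases mul_eq_zero.mp hsg with h' | h'
      · exact absurd h' (ne_of_gt (lt_of_lt_of_le hσ hsbσ))
      · exact absurd (sq_eq_zero_iff.mp h') (ne_of_lt hgpos)
  · intro hKKT
    have hUS_eq : US A σ B S C δ = S := by
      ext p q
      show S p q - Sbar A σ B S C p q * gradS A B S C p q / (denomS A σ B S C p q + δ) = S p q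
      obtain ⟨hg1, hg2⟩ := hKKT p q
      have hsbS : Sbar A σ B S C p q = S p q := by
        simp only [Sbar, Matrix.of_apply, if_pos hg1]
      rw [hsbS, mul_comm, hg2, zero_div, sub_zero]
    rw [hUS_eq]
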